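/- Let $g(t) = a_1 e^{\mu t} + a_2 e^{-\alpha t}$ with $a_1, a_2 > 0$ and $\mu < -\alpha < 0$. Suppose a differentiable function $e(t)$ satisfies $e(t^*) = 0$ at some time $t^* \ge 0$ and $\|\dot e(t)\| \le g(t)$ for $t \ge t^*$. If $\bar\tau > 0$ is such that $(a_1 e^{(\mu+\alpha)t^*} + a_2)\,\bar\tau < c'\, e^{-\alpha(t^* + \bar\tau)} e^{\alpha t^*}$, i.e., $(a_1 e^{(\mu+\alpha)t^*} + a_2)\,\bar\tau < c' e^{-\alpha\bar\tau}$, then $\|e(t)\| < c'\, e^{-\alpha t}$ for all $t \in (t^*, t^* + \bar\tau]$. In particular, the threshold condition $\|e(t)\| \ge c' e^{-\alpha t}$ cannot be reached before time $t^* + \bar\tau$. -/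

import Mathlib

/-!
On `[t*, t]` the derivative bound `g` is decreasing, so it is at most `g(t*)`, and the mean
value inequality with `e(t*) = 0` gives `‖e(t)‖ ≤ g(t*) (t - t*) ≤ g(t*) τ̄`. Factoring
`g(t*) = (a₁ e^{(μ+α)t*} + a₂) e^{-αt*}`, the hypothesis on `τ̄` bounds this strictly by
`c' e^{-α(t* + τ̄)} ≤ c' e^{-αt}`.
-/

open Real

lemma antitone_mul_exp_add_mul_exp {a₁ a₂ μ ν : ℝ} (ha₁ : 0 ≤ a₁) (ha₂ : 0 ≤ a₂)
    (hμ : μ ≤ 0) (hν : ν ≤ 0) :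
    Antitone fun t => a₁ * exp (μ * t) + a₂ * exp (ν * t) := by
  intro s t hst
  have hμt : μ * t ≤ μ * s := mul_le_mul_of_nonpos_left hst hμ
  have hνt : ν * t ≤ ν * s := mul_le_mul_of_nonpos_left hst hν
  dsimp only
  gcongr

lemma mul_exp_add_mul_exp_neg_eq (a₁ a₂ μ α t : ℝ) :
    a₁ * exp (μ * t) + a₂ * exp (-α * t) =
      (a₁ * exp ((μ + α) * t) + a₂) * exp (-α * t) := by
  rw [add_mul, mul_assoc, ← exp_add]
  ring_nf

lemma norm_sub_le_mul_of_hasDerivAt_of_norm_le {E : Type*} [NormedAddCommGroup E]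
    [NormedSpace ℝ E] {f f' : ℝ → E} {a b C : ℝ} (hab : a ≤ b) (hf : ∀ x, a ≤ x → HasDerivAt f (f' x) x)
    (hC : ∀ x, a ≤ x → ‖f' x‖ ≤ C) : ‖f b - f a‖ ≤ C * (b - a) :=
  norm_image_sub_le_of_norm_deriv_le_segment' (fun x hx => (hf x hx.1).hasDerivWithinAt)
    (fun x hx => hC x hx.1) b ⟨hab, le_rfl⟩

theorem no_zeno_lower_bound_general {E : Type*} [NormedAddCommGroup E] [NormedSpace ℝ E]
    (e : ℝ → E) (e' : ℝ → E) (a₁ a₂ μ α c' tstar τ : ℝ)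
    (ha₁ : 0 < a₁) (ha₂ : 0 < a₂) (hα : 0 < α) (hμ : μ < -α)
    (hc' : 0 < c')
    (hzero : e tstar = 0)
    (hderiv : ∀ t : ℝ, tstar ≤ t → HasDerivAt e (e' t) t)
    (hbound : ∀ t : ℝ, tstar ≤ t →
      ‖e' t‖ ≤ a₁ * Real.exp (μ * t) + a₂ * Real.exp (-α * t))
    (hτbound : (a₁ * Real.exp ((μ + α) * tstar) + a₂) * τ < c' * Real.exp (-α * τ)) :
    ∀ t ∈ Set.Ioc tstar (tstar + τ), ‖e t‖ < c' * Real.exp (-α * t) := by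
  rintro t ⟨htstar, htτ⟩
  set K := a₁ * exp ((μ + α) * tstar) + a₂
  have hg : ∀ x, tstar ≤ x → ‖e' x‖ ≤ K * exp (-α * tstar) := by
    intro x hx
    rw [← mul_exp_add_mul_exp_neg_eq]
    exact (hbound x hx).trans
      (antitone_mul_exp_add_mul_exp ha₁.le ha₂.le (by linarith) (by linarith) hx)
  have hmean : ‖e t‖ ≤ K * exp (-α * tstar) * (t - tstar) := by
    simpa [hzero] using norm_sub_le_mul_of_hasDerivAt_of_norm_le htstar.le hderiv hg
  calc ‖e t‖ ≤ K * exp (-α * tstar) * (t - tstar) := hmean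
    _ ≤ K * τ * exp (-α * tstar) := by
      rw [mul_right_comm]; gcongr; linarith
    _ < c' * exp (-α * τ) * exp (-α * tstar) := by gcongr
    _ = c' * exp (-α * (tstar + τ)) := by rw [mul_assoc, ← exp_add]; ring_nf
    _ ≤ c' * exp (-α * t) := by gcongr c' * exp ?_; nlinarith

/-- Zeno-exclusion bound. If `e(t*) = 0`, `‖ė(t)‖ ≤ g(t) = a₁e^{μt} + a₂e^{-αt}`
for `t ≥ t*`, and `(a₁ e^{(μ+α)t*} + a₂) τ̄ < c' e^{-α τ̄}`, then
`‖e(t)‖ < c' e^{-αt}` on `(t*, t* + τ̄]`, so the threshold cannot be reached before `t* + τ̄`. -/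
theorem no_zeno_lower_bound {E : Type*} [NormedAddCommGroup E] [NormedSpace ℝ E]
    (e : ℝ → E) (e' : ℝ → E) (a₁ a₂ μ α c' tstar τ : ℝ)
    (ha₁ : 0 < a₁) (ha₂ : 0 < a₂) (hα : 0 < α) (hμ : μ < -α)
    (hc' : 0 < c') (htstar : 0 ≤ tstar) (hτ : 0 < τ)
    (hzero : e tstar = 0)
    (hderiv : ∀ t : ℝ, tstar ≤ t → HasDerivAt e (e' t) t)
    (hbound : ∀ t : ℝ, tstar ≤ t →
      ‖e' t‖ ≤ a₁ * Real.exp (μ * t) + a₂ * Real.exp (-α * t))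
    (hτbound : (a₁ * Real.exp ((μ + α) * tstar) + a₂) * τ < c' * Real.exp (-α * τ)) :
    ∀ t ∈ Set.Ioc tstar (tstar + τ), ‖e t‖ < c' * Real.exp (-α * t) :=
  no_zeno_lower_bound_general e e' a₁ a₂ μ α c' tstar τ ha₁ ha₂ hα hμ hc' hzero hderiv hbound
    hτbound
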